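/- Under the assumptions of the RQM privacy theorem, the mechanism satisfies (α, ε)-Rényi differential privacy for every α > 1 with ε = log(2(1−q)²(1 + c/Δ)) + m·log(1/(1−q)): for any x, x′ ∈ [−c,c], D_α(P_{Q(x)} ‖ P_{Q(x′)}) ≤ ε. -/

import Mathlib

/-- The evenly spaced quantization levels `B i = -X + 2iX/(m-1)` on `[-X, X]`. -/
noncomputable def Bgrid (X : ℝ) (m : ℕ) (i : ℕ) : ℝ := -X + 2 * i * X / (m - 1)

/-- The index `j` such that `x ∈ [B j, B (j+1))`. -/
noncomputable def jIdx (X : ℝ) (m : ℕ) (x : ℝ) : ℕ :=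
  ⌊(x + X) * (m - 1) / (2 * X)⌋₊

/-- The output distribution of the Randomized Quantization Mechanism
(Lemma 2 of the paper), parametrized by the bin index `j` with
`x ∈ [B j, B (j+1))`: the probability that the mechanism outputs level `i`. -/
noncomputable def rqmProbJ (X : ℝ) (m : ℕ) (q : ℝ) (j : ℕ) (x : ℝ) (i : ℕ) : ℝ :=
  let B := Bgrid X m
  if i = 0 then
    (1-q)^j * ((1-q)^(m-j-2) * (B (m-1) - x) / (B (m-1) - B i)
      + ∑ k ∈ Finset.Ico (j+1) (m-1), q * (1-q)^(k-j-1) * (B k - x) / (B k - B i))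
  else if i ≤ j then
    q * (1-q)^(j-i) * ((1-q)^(m-j-2) * (B (m-1) - x) / (B (m-1) - B i)
      + ∑ k ∈ Finset.Ico (j+1) (m-1), q * (1-q)^(k-j-1) * (B k - x) / (B k - B i))
  else if i = m - 1 then
    (1-q)^(i-j-1) * ((1-q)^j * (x - B 0) / (B i - B 0)
      + ∑ k ∈ Finset.Icc 1 j, q * (1-q)^(j-k) * (x - B k) / (B i - B k))
  else
    q * (1-q)^(i-j-1) * ((1-q)^j * (x - B 0) / (B i - B 0)
      + ∑ k ∈ Finset.Icc 1 j, q * (1-q)^(j-k) * (x - B k) / (B i - B k))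

/-- The output distribution of the Randomized Quantization Mechanism on
input `x`. -/
noncomputable def rqmProb (X : ℝ) (m : ℕ) (q : ℝ) (x : ℝ) (i : ℕ) : ℝ :=
  rqmProbJ X m q (jIdx X m x) x i

/-! For an input in the grid cell `[B j, B (j + 1)]`, the mechanism draws a lower level `a ≤ j`
at distance `j - a` distributed as `truncGeom q j`, independently an upper level `b > j` at
distance `b - j - 1` distributed as `truncGeom q (m - j - 2)`, and rounds the input at random to
`B a` or `B b`, keeping its mean; `rqmProbJ` is this mixture, which is why it sums to one.

Level `i` is therefore output with probability at most `1` at the ends of the grid and `q`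
inside it, and at least that bound times `(1 - q) ^ (m - 2) * Δ / (2 X)`: this comes from the
single draw in which the far end of the grid is chosen, which is at distance at least `Δ` from
an input in `[-c, c]` when `X = c + Δ`. The probabilities of a level under two inputs thus differ
by a factor at most `2 (1 + c / Δ) / (1 - q) ^ (m - 2)`, which bounds the max-divergence and hence
every Rényi divergence of order `α > 1`. -/

open Finset

section RenyiDivergence

variable {ι : Type*}

noncomputable def renyiDiv (α : ℝ) (s : Finset ι) (P Q : ι → ℝ) : ℝ :=
  1 / (α - 1) * Real.log (∑ i ∈ s, P i ^ α * Q i ^ (1 - α))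

lemma rpow_mul_rpow_one_sub_le_of_le_mul {p r E α : ℝ} (hp : 0 ≤ p) (hr : 0 < r)
    (hpr : p ≤ E * r) (hα : 1 < α) :
    p ^ α * r ^ (1 - α) ≤ E ^ (α - 1) * p := by
  have hE : 0 ≤ E := nonneg_of_mul_nonneg_left (hp.trans hpr) hr
  calc p ^ α * r ^ (1 - α) = p * (p ^ (α - 1) * r ^ (1 - α)) := by
        rw [← mul_assoc, ← Real.rpow_one_add' hp (by linarith), add_sub_cancel]
    _ ≤ p * ((E * r) ^ (α - 1) * r ^ (1 - α)) := by
        gcongr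
    _ = E ^ (α - 1) * p := by
        rw [Real.mul_rpow hE hr.le, mul_assoc, ← Real.rpow_add hr, sub_add_sub_cancel',
          sub_self, Real.rpow_zero]
        ring

theorem renyiDiv_le_log_of_le_mul {s : Finset ι} {P Q : ι → ℝ} {E α : ℝ} (hα : 1 < α)
    (hP : ∀ i ∈ s, 0 ≤ P i) (hP_sum : ∑ i ∈ s, P i = 1) (hQ : ∀ i ∈ s, 0 < Q i)
    (hPQ : ∀ i ∈ s, P i ≤ E * Q i) :
    renyiDiv α s P Q ≤ Real.log E := by
  obtain ⟨i₀, hi₀, hPi₀⟩ : ∃ i ∈ s, P i ≠ 0 :=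
    exists_ne_zero_of_sum_ne_zero (by rw [hP_sum]; exact one_ne_zero)
  have hPi₀_pos : 0 < P i₀ := (hP i₀ hi₀).lt_of_ne' hPi₀
  have hE : 0 < E := pos_of_mul_pos_left (hPi₀_pos.trans_le (hPQ i₀ hi₀)) (hQ i₀ hi₀).le
  have hsum_pos : 0 < ∑ i ∈ s, P i ^ α * Q i ^ (1 - α) :=
    sum_pos' (fun i hi => mul_nonneg (Real.rpow_nonneg (hP i hi) _)
        (Real.rpow_nonneg (hQ i hi).le _))
      ⟨i₀, hi₀, mul_pos (Real.rpow_pos_of_pos hPi₀_pos _)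
        (Real.rpow_pos_of_pos (hQ i₀ hi₀) _)⟩
  have hsum_le : ∑ i ∈ s, P i ^ α * Q i ^ (1 - α) ≤ E ^ (α - 1) :=
    calc ∑ i ∈ s, P i ^ α * Q i ^ (1 - α) ≤ ∑ i ∈ s, E ^ (α - 1) * P i :=
          sum_le_sum fun i hi =>
            rpow_mul_rpow_one_sub_le_of_le_mul (hP i hi) (hQ i hi) (hPQ i hi) hα
      _ = E ^ (α - 1) := by rw [← mul_sum, hP_sum, mul_one]
  have hα' : 0 < α - 1 := by linarith
  calc renyiDiv α s P Q ≤ 1 / (α - 1) * Real.log (E ^ (α - 1)) := by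
        unfold renyiDiv
        gcongr
    _ = Real.log E := by
        rw [Real.log_rpow hE]
        field_simp

end RenyiDivergence

section Grid

variable {X y : ℝ} {m : ℕ}

lemma Bgrid_zero (X : ℝ) (m : ℕ) : Bgrid X m 0 = -X := by
  simp [Bgrid]

lemma Bgrid_last (X : ℝ) (hm : 2 ≤ m) : Bgrid X m (m - 1) = X := by
  have hm1 : (m : ℝ) - 1 ≠ 0 := by
    have : (2 : ℝ) ≤ m := by exact_mod_cast hm
    linarith
  rw [Bgrid, Nat.cast_sub (by omega : 1 ≤ m), Nat.cast_one]
  field_simp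
  ring

lemma Bgrid_strictMono (hX : 0 < X) (hm : 2 ≤ m) : StrictMono (Bgrid X m) := by
  intro a b hab
  have hm1 : (0 : ℝ) < m - 1 := by
    have : (2 : ℝ) ≤ m := by exact_mod_cast hm
    linarith
  have hab' : (a : ℝ) < b := by exact_mod_cast hab
  unfold Bgrid
  gcongr

lemma Bgrid_le_iff (hX : 0 < X) (hm : 2 ≤ m) (k : ℕ) :
    Bgrid X m k ≤ y ↔ (k : ℝ) ≤ (y + X) * (m - 1) / (2 * X) := by
  have hm1 : (0 : ℝ) < m - 1 := by
    have : (2 : ℝ) ≤ m := by exact_mod_cast hm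
    linarith
  rw [Bgrid, le_div_iff₀ (by positivity), neg_add_le_iff_le_add, div_le_iff₀ hm1]
  constructor <;> intro h <;> linarith

lemma lt_Bgrid_iff (hX : 0 < X) (hm : 2 ≤ m) (k : ℕ) :
    y < Bgrid X m k ↔ (y + X) * (m - 1) / (2 * X) < k := by
  simpa only [not_le] using (Bgrid_le_iff hX hm k).not

lemma jIdx_spec (hm : 2 ≤ m) (hy : y ∈ Set.Ico (-X) X) :
    jIdx X m y + 2 ≤ m ∧
      y ∈ Set.Icc (Bgrid X m (jIdx X m y)) (Bgrid X m (jIdx X m y + 1)) := by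
  obtain ⟨hyl, hyr⟩ := hy
  have hX : 0 < X := by linarith
  have hz : 0 ≤ (y + X) * (m - 1) / (2 * X) := by
    have : (2 : ℝ) ≤ m := by exact_mod_cast hm
    apply div_nonneg (mul_nonneg _ _) <;> linarith
  refine ⟨?_, (Bgrid_le_iff hX hm _).2 (Nat.floor_le hz), ?_⟩
  · have : jIdx X m y < m - 1 := by
      rw [jIdx, Nat.floor_lt hz, ← lt_Bgrid_iff hX hm, Bgrid_last X hm]
      exact hyr
    omega
  · refine ((lt_Bgrid_iff hX hm _).2 ?_).le
    rw [Nat.cast_succ]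
    exact Nat.lt_floor_add_one _

end Grid

section Decomposition

/-- The law of the first success in a run of Bernoulli(`q`) trials, with every run of
`n` or more failures recorded as `n`. -/
noncomputable def truncGeom (q : ℝ) (n t : ℕ) : ℝ :=
  if t = n then (1 - q) ^ n else q * (1 - q) ^ t

variable {X y q : ℝ} {m j n t : ℕ}

lemma sum_truncGeom (q : ℝ) (n : ℕ) : ∑ t ∈ range (n + 1), truncGeom q n t = 1 := by
  have hlt : ∀ t ∈ range n, truncGeom q n t = q * (1 - q) ^ t :=
    fun t ht => if_neg (mem_range.1 ht).ne
  rw [sum_range_succ, sum_congr rfl hlt, ← mul_sum, truncGeom, if_pos rfl]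
  linear_combination -(geom_sum_mul (1 - q) n)

lemma truncGeom_nonneg (hq0 : 0 ≤ q) (hq1 : q ≤ 1) : 0 ≤ truncGeom q n t := by
  have := sub_nonneg.2 hq1
  unfold truncGeom
  split_ifs <;> positivity

lemma truncGeom_le (hq0 : 0 ≤ q) (hq1 : q ≤ 1) :
    truncGeom q n t ≤ if t = n then 1 else q := by
  have h0 := sub_nonneg.2 hq1
  have h1 : 1 - q ≤ 1 := by linarith
  unfold truncGeom
  split_ifs
  · exact pow_le_one₀ h0 h1
  · exact mul_le_of_le_one_right hq0 (pow_le_one₀ h0 h1)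

lemma mul_pow_le_truncGeom (hq0 : 0 ≤ q) (hq1 : q ≤ 1) (ht : t ≤ n) :
    (if t = n then 1 else q) * (1 - q) ^ n ≤ truncGeom q n t := by
  unfold truncGeom
  split_ifs
  · rw [one_mul]
  · exact mul_le_mul_of_nonneg_left
      (pow_le_pow_of_le_one (sub_nonneg.2 hq1) (by linarith) ht) hq0

/-- The probability of rounding down to `B i`, given that `i` is the lower level. -/
noncomputable def roundDownProb (X : ℝ) (m : ℕ) (q : ℝ) (j : ℕ) (y : ℝ) (i : ℕ) : ℝ :=
  ∑ b ∈ Ico (j + 1) m,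
    truncGeom q (m - j - 2) (b - j - 1) * ((Bgrid X m b - y) / (Bgrid X m b - Bgrid X m i))

/-- The probability of rounding up to `B i`, given that `i` is the upper level. -/
noncomputable def roundUpProb (X : ℝ) (m : ℕ) (q : ℝ) (j : ℕ) (y : ℝ) (i : ℕ) : ℝ :=
  ∑ a ∈ range (j + 1),
    truncGeom q j (j - a) * ((y - Bgrid X m a) / (Bgrid X m i - Bgrid X m a))

lemma sum_truncGeom_lower (q : ℝ) (j : ℕ) :
    ∑ a ∈ range (j + 1), truncGeom q j (j - a) = 1 := by
  rw [← sum_truncGeom q j, ← sum_range_reflect]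
  refine sum_congr rfl fun a ha => ?_
  rw [mem_range] at ha
  congr 1
  omega

lemma sum_truncGeom_upper (q : ℝ) (hj : j + 2 ≤ m) :
    ∑ b ∈ Ico (j + 1) m, truncGeom q (m - j - 2) (b - j - 1) = 1 := by
  rw [sum_Ico_eq_sum_range, show m - (j + 1) = m - j - 2 + 1 by omega,
    ← sum_truncGeom q (m - j - 2)]
  exact sum_congr rfl fun t _ => by congr 1; omega

lemma rqmProbJ_of_le (X q y : ℝ) (hj : j + 2 ≤ m) {i : ℕ} (hi : i ≤ j) :
    rqmProbJ X m q j y i = truncGeom q j (j - i) * roundDownProb X m q j y i := by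
  have hdown : roundDownProb X m q j y i
      = (1 - q) ^ (m - j - 2) * (Bgrid X m (m - 1) - y) / (Bgrid X m (m - 1) - Bgrid X m i)
        + ∑ k ∈ Ico (j + 1) (m - 1),
            q * (1 - q) ^ (k - j - 1) * (Bgrid X m k - y) / (Bgrid X m k - Bgrid X m i) := by
    rw [roundDownProb, show Ico (j + 1) m = Ico (j + 1) (m - 1 + 1) by congr 1; omega,
      sum_Ico_succ_top (by omega : j + 1 ≤ m - 1), add_comm]
    congr 1
    · rw [truncGeom, if_pos (by omega), mul_div_assoc]
    · refine sum_congr rfl fun k hk => ?_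
      rw [truncGeom, if_neg (by simp only [mem_Ico] at hk; omega), mul_div_assoc]
  rw [hdown, rqmProbJ, truncGeom]
  rcases Nat.eq_zero_or_pos i with rfl | hi0
  · simp
  · simp only [if_neg hi0.ne', if_pos hi, if_neg (by omega : j - i ≠ j)]

lemma rqmProbJ_of_lt (X q y : ℝ) {i : ℕ} (hji : j < i) (hi : i < m) :
    rqmProbJ X m q j y i = truncGeom q (m - j - 2) (i - j - 1) * roundUpProb X m q j y i := by
  have hup : roundUpProb X m q j y i
      = (1 - q) ^ j * (y - Bgrid X m 0) / (Bgrid X m i - Bgrid X m 0)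
        + ∑ k ∈ Icc 1 j,
            q * (1 - q) ^ (j - k) * (y - Bgrid X m k) / (Bgrid X m i - Bgrid X m k) := by
    rw [roundUpProb, sum_range_succ', add_comm, ← Ico_add_one_right_eq_Icc, sum_Ico_eq_sum_range]
    congr 1
    · rw [truncGeom, Nat.sub_zero, if_pos rfl, mul_div_assoc]
    · refine sum_congr rfl fun k hk => ?_
      rw [mem_range] at hk
      rw [truncGeom, if_neg (by omega), mul_div_assoc, add_comm 1 k]
  rw [hup, rqmProbJ, truncGeom]
  simp only [if_neg (by omega : i ≠ 0), if_neg (by omega : ¬ i ≤ j)]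
  rcases eq_or_ne i (m - 1) with rfl | him
  · simp only [↓reduceIte, show m - 1 - j - 1 = m - j - 2 by omega]
  · simp only [if_neg him, if_neg (by omega : i - j - 1 ≠ m - j - 2)]

lemma sum_rqmProbJ (hX : 0 < X) (q y : ℝ) (hj : j + 2 ≤ m) :
    ∑ i ∈ range m, rqmProbJ X m q j y i = 1 := by
  set c := fun a => truncGeom q j (j - a)
  set d := fun b => truncGeom q (m - j - 2) (b - j - 1)
  set B := Bgrid X m
  have hdown : ∑ a ∈ range (j + 1), rqmProbJ X m q j y a
      = ∑ a ∈ range (j + 1), ∑ b ∈ Ico (j + 1) m, c a * d b * ((B b - y) / (B b - B a)) :=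
    sum_congr rfl fun a ha => by
      rw [rqmProbJ_of_le X q y hj (by simp only [mem_range] at ha; omega), roundDownProb,
        mul_sum]
      simp only [c, d, B, mul_assoc]
  have hup : ∑ b ∈ Ico (j + 1) m, rqmProbJ X m q j y b
      = ∑ a ∈ range (j + 1), ∑ b ∈ Ico (j + 1) m,
          c a * d b * ((y - B a) / (B b - B a)) := by
    rw [sum_comm]
    refine sum_congr rfl fun b hb => ?_
    rw [mem_Ico] at hb
    rw [rqmProbJ_of_lt X q y hb.1 hb.2, roundUpProb, mul_sum]
    refine sum_congr rfl fun a _ => ?_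
    simp only [c, d, B]
    ring
  rw [← sum_range_add_sum_Ico _ (by omega : j + 1 ≤ m), hdown, hup, ← sum_add_distrib]
  calc ∑ a ∈ range (j + 1), (∑ b ∈ Ico (j + 1) m, c a * d b * ((B b - y) / (B b - B a))
        + ∑ b ∈ Ico (j + 1) m, c a * d b * ((y - B a) / (B b - B a)))
      = ∑ a ∈ range (j + 1), ∑ b ∈ Ico (j + 1) m, c a * d b := by
        refine sum_congr rfl fun a ha => ?_
        rw [← sum_add_distrib]
        refine sum_congr rfl fun b hb => ?_
        have hab : B a < B b := Bgrid_strictMono hX (by omega) (by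
          simp only [mem_range, mem_Ico] at ha hb; omega)
        rw [← mul_add, ← add_div, sub_add_sub_cancel, div_self (sub_ne_zero.2 hab.ne'),
          mul_one]
    _ = 1 := by
        rw [← sum_mul_sum, sum_truncGeom_lower, sum_truncGeom_upper q hj, mul_one]

end Decomposition

section Bounds

lemma sum_mul_mem_Icc {ι : Type*} {s : Finset ι} {w f : ι → ℝ} (hw : ∀ i ∈ s, 0 ≤ w i)
    (hw_sum : ∑ i ∈ s, w i = 1) (hf : ∀ i ∈ s, f i ∈ Set.Icc (0 : ℝ) 1) :
    ∑ i ∈ s, w i * f i ∈ Set.Icc (0 : ℝ) 1 :=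
  ⟨sum_nonneg fun i hi => mul_nonneg (hw i hi) (hf i hi).1,
    hw_sum ▸ sum_le_sum fun i hi => mul_le_of_le_one_right (hw i hi) (hf i hi).2⟩

lemma sub_div_sub_mem_Icc {a b y : ℝ} (hab : a < b) (hy : y ∈ Set.Icc a b) :
    (b - y) / (b - a) ∈ Set.Icc (0 : ℝ) 1 :=
  ⟨div_nonneg (by linarith [hy.2]) (by linarith),
    (div_le_one (by linarith)).2 (by linarith [hy.1])⟩

lemma sub_div_sub_mem_Icc' {a b y : ℝ} (hab : a < b) (hy : y ∈ Set.Icc a b) :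
    (y - a) / (b - a) ∈ Set.Icc (0 : ℝ) 1 :=
  ⟨div_nonneg (by linarith [hy.1]) (by linarith),
    (div_le_one (by linarith)).2 (by linarith [hy.2])⟩

variable {X y q Δ : ℝ} {m j i : ℕ}

lemma roundDownProb_term_mem_Icc (hX : 0 < X) (hj : j + 2 ≤ m)
    (hy : y ∈ Set.Icc (Bgrid X m j) (Bgrid X m (j + 1))) (hi : i ≤ j) {b : ℕ}
    (hb : b ∈ Ico (j + 1) m) :
    (Bgrid X m b - y) / (Bgrid X m b - Bgrid X m i) ∈ Set.Icc (0 : ℝ) 1 := by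
  have hB := Bgrid_strictMono hX (by omega : 2 ≤ m)
  rw [mem_Ico] at hb
  exact sub_div_sub_mem_Icc (hB (by omega))
    ⟨(hB.monotone hi).trans hy.1, hy.2.trans (hB.monotone hb.1)⟩

lemma roundUpProb_term_mem_Icc (hX : 0 < X) (hj : j + 2 ≤ m)
    (hy : y ∈ Set.Icc (Bgrid X m j) (Bgrid X m (j + 1))) (hji : j < i) {a : ℕ}
    (ha : a ∈ range (j + 1)) :
    (y - Bgrid X m a) / (Bgrid X m i - Bgrid X m a) ∈ Set.Icc (0 : ℝ) 1 := by
  have hB := Bgrid_strictMono hX (by omega : 2 ≤ m)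
  rw [mem_range] at ha
  exact sub_div_sub_mem_Icc' (hB (by omega))
    ⟨(hB.monotone (by omega)).trans hy.1, hy.2.trans (hB.monotone hji)⟩

lemma roundDownProb_mem_Icc (hX : 0 < X) (hq0 : 0 ≤ q) (hq1 : q ≤ 1) (hj : j + 2 ≤ m)
    (hy : y ∈ Set.Icc (Bgrid X m j) (Bgrid X m (j + 1))) (hi : i ≤ j) :
    roundDownProb X m q j y i ∈ Set.Icc (0 : ℝ) 1 :=
  sum_mul_mem_Icc (fun _ _ => truncGeom_nonneg hq0 hq1) (sum_truncGeom_upper q hj)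
    fun _ hb => roundDownProb_term_mem_Icc hX hj hy hi hb

lemma roundUpProb_mem_Icc (hX : 0 < X) (hq0 : 0 ≤ q) (hq1 : q ≤ 1) (hj : j + 2 ≤ m)
    (hy : y ∈ Set.Icc (Bgrid X m j) (Bgrid X m (j + 1))) (hji : j < i) :
    roundUpProb X m q j y i ∈ Set.Icc (0 : ℝ) 1 :=
  sum_mul_mem_Icc (fun _ _ => truncGeom_nonneg hq0 hq1) (sum_truncGeom_lower q j)
    fun _ ha => roundUpProb_term_mem_Icc hX hj hy hji ha

lemma pow_mul_le_roundDownProb (hX : 0 < X) (hq0 : 0 ≤ q) (hq1 : q ≤ 1) (hj : j + 2 ≤ m)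
    (hy : y ∈ Set.Icc (Bgrid X m j) (Bgrid X m (j + 1))) (hΔ : Δ ≤ X - y) (hi : i ≤ j) :
    (1 - q) ^ (m - j - 2) * (Δ / (2 * X)) ≤ roundDownProb X m q j y i := by
  have hm : 2 ≤ m := by omega
  refine le_trans ?_ (single_le_sum (fun b hb => mul_nonneg (truncGeom_nonneg hq0 hq1)
    (roundDownProb_term_mem_Icc hX hj hy hi hb).1) (by simp only [mem_Ico]; omega : m - 1 ∈ _))
  rw [truncGeom, if_pos (by omega), Bgrid_last X hm]
  have hB := Bgrid_strictMono hX hm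
  have hiX : Bgrid X m i < X := by
    simpa only [Bgrid_last X hm] using hB (show i < m - 1 by omega)
  have hXi : -X ≤ Bgrid X m i := by
    simpa only [Bgrid_zero] using hB.monotone (Nat.zero_le i)
  have hyX : y ≤ X := by
    simpa only [Bgrid_last X hm] using hy.2.trans (hB.monotone (show j + 1 ≤ m - 1 by omega))
  gcongr
  linarith

lemma pow_mul_le_roundUpProb (hX : 0 < X) (hq0 : 0 ≤ q) (hq1 : q ≤ 1) (hj : j + 2 ≤ m)
    (hy : y ∈ Set.Icc (Bgrid X m j) (Bgrid X m (j + 1))) (hΔ : Δ ≤ X + y) (hji : j < i)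
    (hi : i < m) :
    (1 - q) ^ j * (Δ / (2 * X)) ≤ roundUpProb X m q j y i := by
  have hm : 2 ≤ m := by omega
  refine le_trans ?_ (single_le_sum (fun a ha => mul_nonneg (truncGeom_nonneg hq0 hq1)
    (roundUpProb_term_mem_Icc hX hj hy hji ha).1) (by simp : 0 ∈ range (j + 1)))
  rw [truncGeom, Nat.sub_zero, if_pos rfl, Bgrid_zero]
  have hB := Bgrid_strictMono hX hm
  have hiX : Bgrid X m i ≤ X := by
    simpa only [Bgrid_last X hm] using hB.monotone (show i ≤ m - 1 by omega)
  have hXi : -X < Bgrid X m i := by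
    simpa only [Bgrid_zero] using hB (show 0 < i by omega)
  have hXy : -X ≤ y := by
    simpa only [Bgrid_zero] using (hB.monotone (Nat.zero_le j)).trans hy.1
  gcongr <;> linarith

end Bounds

section Mechanism

noncomputable def levelWeight (m : ℕ) (q : ℝ) (i : ℕ) : ℝ :=
  if i = 0 ∨ i = m - 1 then 1 else q

noncomputable def rqmLowerFactor (X : ℝ) (m : ℕ) (q Δ : ℝ) : ℝ :=
  (1 - q) ^ (m - 2) * (Δ / (2 * X))

variable {X y y' q Δ : ℝ} {m j i : ℕ}

lemma levelWeight_of_le (hj : j + 2 ≤ m) (hi : i ≤ j) :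
    levelWeight m q i = if j - i = j then 1 else q :=
  if_congr (by omega) rfl rfl

lemma levelWeight_of_lt (hji : j < i) (hi : i < m) :
    levelWeight m q i = if i - j - 1 = m - j - 2 then 1 else q :=
  if_congr (by omega) rfl rfl

lemma levelWeight_pos (hq : 0 < q) : 0 < levelWeight m q i := by
  unfold levelWeight
  split_ifs
  exacts [one_pos, hq]

lemma rqmLowerFactor_pos (hX : 0 < X) (hq : q < 1) (hΔ : 0 < Δ) :
    0 < rqmLowerFactor X m q Δ := by
  have := sub_pos.2 hq
  unfold rqmLowerFactor
  positivity

lemma rqmProbJ_nonneg (hX : 0 < X) (hq0 : 0 ≤ q) (hq1 : q ≤ 1) (hj : j + 2 ≤ m)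
    (hy : y ∈ Set.Icc (Bgrid X m j) (Bgrid X m (j + 1))) (hi : i < m) :
    0 ≤ rqmProbJ X m q j y i := by
  rcases le_or_gt i j with hij | hji
  · rw [rqmProbJ_of_le X q y hj hij]
    exact mul_nonneg (truncGeom_nonneg hq0 hq1) (roundDownProb_mem_Icc hX hq0 hq1 hj hy hij).1
  · rw [rqmProbJ_of_lt X q y hji hi]
    exact mul_nonneg (truncGeom_nonneg hq0 hq1) (roundUpProb_mem_Icc hX hq0 hq1 hj hy hji).1

lemma rqmProbJ_le_levelWeight (hX : 0 < X) (hq0 : 0 ≤ q) (hq1 : q ≤ 1) (hj : j + 2 ≤ m)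
    (hy : y ∈ Set.Icc (Bgrid X m j) (Bgrid X m (j + 1))) (hi : i < m) :
    rqmProbJ X m q j y i ≤ levelWeight m q i := by
  rcases le_or_gt i j with hij | hji
  · rw [rqmProbJ_of_le X q y hj hij, levelWeight_of_le hj hij]
    exact (mul_le_of_le_one_right (truncGeom_nonneg hq0 hq1)
      (roundDownProb_mem_Icc hX hq0 hq1 hj hy hij).2).trans (truncGeom_le hq0 hq1)
  · rw [rqmProbJ_of_lt X q y hji hi, levelWeight_of_lt hji hi]
    exact (mul_le_of_le_one_right (truncGeom_nonneg hq0 hq1)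
      (roundUpProb_mem_Icc hX hq0 hq1 hj hy hji).2).trans (truncGeom_le hq0 hq1)

lemma levelWeight_mul_le_rqmProbJ (hX : 0 < X) (hq0 : 0 ≤ q) (hq1 : q ≤ 1) (hj : j + 2 ≤ m)
    (hy : y ∈ Set.Icc (Bgrid X m j) (Bgrid X m (j + 1))) (hl : Δ ≤ X - y) (hr : Δ ≤ X + y)
    (hi : i < m) :
    levelWeight m q i * rqmLowerFactor X m q Δ ≤ rqmProbJ X m q j y i := by
  rcases le_or_gt i j with hij | hji
  · rw [rqmProbJ_of_le X q y hj hij, levelWeight_of_le hj hij]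
    calc (if j - i = j then 1 else q) * rqmLowerFactor X m q Δ
        = (if j - i = j then 1 else q) * (1 - q) ^ j
            * ((1 - q) ^ (m - j - 2) * (Δ / (2 * X))) := by
          rw [rqmLowerFactor, show m - 2 = j + (m - j - 2) by omega, pow_add]
          ring
      _ ≤ _ := mul_le_mul_of_nonneg (mul_pow_le_truncGeom hq0 hq1 (Nat.sub_le j i))
          (pow_mul_le_roundDownProb hX hq0 hq1 hj hy hl hij)
          (by split_ifs <;> positivity) (roundDownProb_mem_Icc hX hq0 hq1 hj hy hij).1
  · rw [rqmProbJ_of_lt X q y hji hi, levelWeight_of_lt hji hi]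
    calc (if i - j - 1 = m - j - 2 then 1 else q) * rqmLowerFactor X m q Δ
        = (if i - j - 1 = m - j - 2 then 1 else q) * (1 - q) ^ (m - j - 2)
            * ((1 - q) ^ j * (Δ / (2 * X))) := by
          rw [rqmLowerFactor, show m - 2 = (m - j - 2) + j by omega, pow_add]
          ring
      _ ≤ _ := mul_le_mul_of_nonneg (mul_pow_le_truncGeom hq0 hq1 (by omega))
          (pow_mul_le_roundUpProb hX hq0 hq1 hj hy hr hji hi)
          (by split_ifs <;> positivity) (roundUpProb_mem_Icc hX hq0 hq1 hj hy hji).1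

lemma rqmProb_nonneg (hm : 2 ≤ m) (hq0 : 0 ≤ q) (hq1 : q ≤ 1) (hy : y ∈ Set.Ico (-X) X)
    (hi : i < m) : 0 ≤ rqmProb X m q y i :=
  rqmProbJ_nonneg (by linarith [hy.1, hy.2]) hq0 hq1 (jIdx_spec hm hy).1 (jIdx_spec hm hy).2 hi

lemma sum_rqmProb (hm : 2 ≤ m) (q : ℝ) (hy : y ∈ Set.Ico (-X) X) :
    ∑ i ∈ range m, rqmProb X m q y i = 1 :=
  sum_rqmProbJ (by linarith [hy.1, hy.2]) q y (jIdx_spec hm hy).1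

lemma rqmProb_le_levelWeight (hm : 2 ≤ m) (hq0 : 0 ≤ q) (hq1 : q ≤ 1)
    (hy : y ∈ Set.Ico (-X) X) (hi : i < m) : rqmProb X m q y i ≤ levelWeight m q i :=
  rqmProbJ_le_levelWeight (by linarith [hy.1, hy.2]) hq0 hq1 (jIdx_spec hm hy).1
    (jIdx_spec hm hy).2 hi

lemma levelWeight_mul_le_rqmProb (hm : 2 ≤ m) (hq0 : 0 ≤ q) (hq1 : q ≤ 1) (hΔ : 0 < Δ)
    (hl : Δ ≤ X - y) (hr : Δ ≤ X + y) (hi : i < m) :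
    levelWeight m q i * rqmLowerFactor X m q Δ ≤ rqmProb X m q y i := by
  have hy : y ∈ Set.Ico (-X) X := ⟨by linarith, by linarith⟩
  exact levelWeight_mul_le_rqmProbJ (by linarith) hq0 hq1 (jIdx_spec hm hy).1
    (jIdx_spec hm hy).2 hl hr hi

lemma rqmProb_pos (hm : 2 ≤ m) (hq0 : 0 < q) (hq1 : q < 1) (hΔ : 0 < Δ)
    (hl : Δ ≤ X - y) (hr : Δ ≤ X + y) (hi : i < m) : 0 < rqmProb X m q y i :=
  (mul_pos (levelWeight_pos hq0) (rqmLowerFactor_pos (by linarith) hq1 hΔ)).trans_le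
    (levelWeight_mul_le_rqmProb hm hq0.le hq1.le hΔ hl hr hi)

lemma rqmProb_le_mul_rqmProb (hm : 2 ≤ m) (hq0 : 0 ≤ q) (hq1 : q < 1) (hΔ : 0 < Δ)
    (hy : y ∈ Set.Ico (-X) X) (hl' : Δ ≤ X - y') (hr' : Δ ≤ X + y') (hi : i < m) :
    rqmProb X m q y i ≤ (rqmLowerFactor X m q Δ)⁻¹ * rqmProb X m q y' i := by
  have hK := rqmLowerFactor_pos (X := X) (m := m) (by linarith) hq1 hΔ
  calc rqmProb X m q y i ≤ levelWeight m q i := rqmProb_le_levelWeight hm hq0 hq1.le hy hi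
    _ = (rqmLowerFactor X m q Δ)⁻¹ * (levelWeight m q i * rqmLowerFactor X m q Δ) := by
        field_simp
    _ ≤ (rqmLowerFactor X m q Δ)⁻¹ * rqmProb X m q y' i := by
        gcongr
        exact levelWeight_mul_le_rqmProb hm hq0 hq1.le hΔ hl' hr' hi

lemma log_inv_rqmLowerFactor {c : ℝ} (hm : 2 ≤ m) (hq : q < 1) (hΔ : 0 < Δ)
    (hcΔ : 0 < c + Δ) :
    Real.log (rqmLowerFactor (c + Δ) m q Δ)⁻¹
      = Real.log (2 * (1 - q) ^ 2 * (1 + c / Δ)) + m * Real.log (1 / (1 - q)) := by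
  have h1q : 0 < 1 - q := sub_pos.2 hq
  have hcΔ' : 0 < 1 + c / Δ := by
    rw [one_add_div hΔ.ne', add_comm]
    positivity
  rw [← Real.log_pow, ← Real.log_mul (by positivity) (by positivity)]
  congr 1
  obtain ⟨k, rfl⟩ := Nat.exists_eq_add_of_le' hm
  rw [rqmLowerFactor, Nat.add_sub_cancel, one_div, inv_pow, pow_add]
  field_simp
  ring

end Mechanism

theorem rqm_renyi_dp_general (c Δ : ℝ) (hΔ : 0 < Δ)
    (m : ℕ) (hm : 2 ≤ m) (q : ℝ) (hq : q ∈ Set.Ioo (0:ℝ) 1)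
    (α : ℝ) (hα : 1 < α)
    (x x' : ℝ) (hx : x ∈ Set.Icc (-c) c) (hx' : x' ∈ Set.Icc (-c) c) :
    (1 / (α - 1)) * Real.log (∑ i ∈ Finset.range m,
        rqmProb (c+Δ) m q x i ^ α * rqmProb (c+Δ) m q x' i ^ (1 - α)) ≤
      Real.log (2 * (1-q)^2 * (1 + c/Δ)) + m * Real.log (1/(1-q)) := by
  obtain ⟨hq0, hq1⟩ := hq
  have hx_mem : x ∈ Set.Ico (-(c + Δ)) (c + Δ) := ⟨by linarith [hx.1], by linarith [hx.2]⟩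
  have hl : Δ ≤ c + Δ - x' := by linarith [hx'.2]
  have hr : Δ ≤ c + Δ + x' := by linarith [hx'.1]
  calc renyiDiv α (range m) (rqmProb (c + Δ) m q x) (rqmProb (c + Δ) m q x')
      ≤ Real.log (rqmLowerFactor (c + Δ) m q Δ)⁻¹ :=
        renyiDiv_le_log_of_le_mul hα
          (fun i hi => rqmProb_nonneg hm hq0.le hq1.le hx_mem (mem_range.1 hi))
          (sum_rqmProb hm q hx_mem)
          (fun i hi => rqmProb_pos hm hq0 hq1 hΔ hl hr (mem_range.1 hi))
          (fun i hi => rqmProb_le_mul_rqmProb hm hq0.le hq1 hΔ hx_mem hl hr (mem_range.1 hi))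
    _ = _ := log_inv_rqmLowerFactor hm hq1 hΔ (by linarith)

/-- The Randomized Quantization Mechanism satisfies `(α, ε)`-Rényi differential
privacy for every `α > 1` with
`ε = log(2(1-q)²(1+c/Δ)) + m·log(1/(1-q))`. -/
theorem rqm_renyi_dp (c Δ : ℝ) (hc : 0 < c) (hΔ : 0 < Δ)
    (m : ℕ) (hm : 2 ≤ m) (q : ℝ) (hq : q ∈ Set.Ioo (0:ℝ) 1)
    (α : ℝ) (hα : 1 < α)
    (x x' : ℝ) (hx : x ∈ Set.Icc (-c) c) (hx' : x' ∈ Set.Icc (-c) c) :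
    (1 / (α - 1)) * Real.log (∑ i ∈ Finset.range m,
        rqmProb (c+Δ) m q x i ^ α * rqmProb (c+Δ) m q x' i ^ (1 - α)) ≤
      Real.log (2 * (1-q)^2 * (1 + c/Δ)) + m * Real.log (1/(1-q)) :=
  rqm_renyi_dp_general c Δ hΔ m hm q hq α hα x x' hx hx'
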